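/- Let U be a feasible solution of M-CLP with slack x and P a feasible solution of M-CLP* with slack q. Then z(U) = z*(P) if and only if the complementary slackness conditions hold: Σ_{k=1}^K ∫_{[0,T]} x_k(T−s) dP_k(s) = 0 and Σ_{j=1}^J ∫_{[0,T]} q_j(T−t) dU_j(t) = 0. In that case U is an optimal solution of M-CLP and P is an optimal solution of M-CLP*. -/

import Mathlib

/-!
Integrating the slacks against the opposite measures and expanding, `z*(P) - z(U)` equals the
sum of the two complementary slackness integrals, provided the cross terms
`∫ P_k(T - t) dU_j(t)` and `∫ U_j(T - s) dP_k(s)` coincide; they do by Fubini, both being the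
`dU_j ⊗ dP_k`-measure of the half-plane `{(t, s) | t + s ≤ T}`. Feasibility makes both slackness
integrals nonnegative, which gives weak duality `z(U) ≤ z*(P)`, hence the equivalence and the
optimality of `U` and `P` when `z(U) = z*(P)`.
-/

open MeasureTheory Filter

/-- A feasible solution of M-CLP. -/
def PrimalFeasible {K J : ℕ} (A : Matrix (Fin K) (Fin J) ℝ) (b β lam : Fin K → ℝ) (T : ℝ)
    (U : ℝ → Fin J → ℝ) : Prop :=
  (∀ j, MonotoneOn (fun t => U t j) (Set.Icc 0 T)) ∧
  (∀ j, ∀ t ∈ Set.Ico (0:ℝ) T,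
    Tendsto (fun s => U s j) (nhdsWithin t (Set.Ioi t)) (nhds (U t j))) ∧
  (∀ j, 0 ≤ U 0 j) ∧
  (∀ t ∈ Set.Ico (0:ℝ) T, ∀ k, A.mulVec (U t) k ≤ β k + t * b k) ∧
  (∀ k, A.mulVec (U T) k ≤ β k + T * b k + lam k)

/-- A feasible solution of M-CLP*. -/
def DualFeasible {K J : ℕ} (A : Matrix (Fin K) (Fin J) ℝ) (c γ μ : Fin J → ℝ) (T : ℝ)
    (P : ℝ → Fin K → ℝ) : Prop :=
  (∀ k, MonotoneOn (fun s => P s k) (Set.Icc 0 T)) ∧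
  (∀ k, ∀ s ∈ Set.Ico (0:ℝ) T,
    Tendsto (fun r => P r k) (nhdsWithin s (Set.Ioi s)) (nhds (P s k))) ∧
  (∀ k, 0 ≤ P 0 k) ∧
  (∀ s ∈ Set.Ico (0:ℝ) T, ∀ j, γ j + s * c j ≤ A.transpose.mulVec (P s) j) ∧
  (∀ j, γ j + T * c j + μ j ≤ A.transpose.mulVec (P T) j)

/-- `ν i` is the Lebesgue–Stieltjes measure on `[0,T]` of the (right-continuous,
nondecreasing) function `F · i`, with the convention `F (0-) i = 0`. -/
def LSFamily {I : Type*} (T : ℝ) (F : ℝ → I → ℝ) (ν : I → Measure ℝ) : Prop :=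
  ∀ i, ν i (Set.Icc 0 T)ᶜ = 0 ∧
    ∀ x ∈ Set.Icc (0:ℝ) T, ν i (Set.Icc 0 x) = ENNReal.ofReal (F x i)

/-- The M-CLP objective. -/
noncomputable def zPrimal {J : ℕ} (c γ μ : Fin J → ℝ) (T : ℝ) (U : ℝ → Fin J → ℝ)
    (ν : Fin J → Measure ℝ) : ℝ :=
  (∑ j, μ j * U 0 j) + ∑ j, ∫ t in Set.Icc (0:ℝ) T, (γ j + (T - t) * c j) ∂(ν j)

/-- The M-CLP* objective. -/
noncomputable def zDual {K : ℕ} (b β lam : Fin K → ℝ) (T : ℝ) (P : ℝ → Fin K → ℝ)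
    (ν : Fin K → Measure ℝ) : ℝ :=
  (∑ k, lam k * P 0 k) + ∑ k, ∫ s in Set.Icc (0:ℝ) T, (β k + (T - s) * b k) ∂(ν k)

/-- The primal slack `x(t) = β + t·b − A·U(t)` for `0 ≤ t < T`, and
`x(T) = β + T·b + λ − A·U(T)`. -/
noncomputable def xSlack {K J : ℕ} (A : Matrix (Fin K) (Fin J) ℝ) (b β lam : Fin K → ℝ)
    (T : ℝ) (U : ℝ → Fin J → ℝ) (t : ℝ) (k : Fin K) : ℝ :=
  β k + t * b k + (if t < T then 0 else lam k) - A.mulVec (U t) k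

/-- The dual slack `q(s) = Aᵀ·P(s) − γ − s·c` for `0 ≤ s < T`, and
`q(T) = Aᵀ·P(T) − γ − T·c − μ`. -/
noncomputable def qSlack {K J : ℕ} (A : Matrix (Fin K) (Fin J) ℝ) (c γ μ : Fin J → ℝ)
    (T : ℝ) (P : ℝ → Fin K → ℝ) (s : ℝ) (j : Fin J) : ℝ :=
  A.transpose.mulVec (P s) j - γ j - s * c j - (if s < T then 0 else μ j)

open Set

lemma antitone_measure_Iic_sub (ν : Measure ℝ) (T : ℝ) : Antitone fun t => ν (Iic (T - t)) :=
  fun _ _ h => measure_mono (Iic_subset_Iic.2 (by linarith))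

lemma lintegral_measure_Iic_sub_comm (ν ν' : Measure ℝ) [SFinite ν] [SFinite ν'] (T : ℝ) :
    ∫⁻ t, ν' (Iic (T - t)) ∂ν = ∫⁻ s, ν (Iic (T - s)) ∂ν' := by
  have hS : MeasurableSet {p : ℝ × ℝ | p.1 + p.2 ≤ T} :=
    measurableSet_le (by fun_prop) measurable_const
  calc ∫⁻ t, ν' (Iic (T - t)) ∂ν = ν.prod ν' {p | p.1 + p.2 ≤ T} := by
        rw [Measure.prod_apply hS]
        refine lintegral_congr fun t => congrArg ν' (ext fun s => ?_)
        simp only [mem_Iic, mem_preimage, mem_ofPred_eq]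
        constructor <;> intro h <;> linarith
    _ = ∫⁻ s, ν (Iic (T - s)) ∂ν' := by
        rw [Measure.prod_apply_symm hS]
        refine lintegral_congr fun s => congrArg ν (ext fun t => ?_)
        simp only [mem_Iic, mem_preimage, mem_ofPred_eq]
        constructor <;> intro h <;> linarith

lemma integral_measureReal_Iic_sub_comm (ν ν' : Measure ℝ) [IsFiniteMeasure ν]
    [IsFiniteMeasure ν'] (T : ℝ) :
    ∫ t, ν'.real (Iic (T - t)) ∂ν = ∫ s, ν.real (Iic (T - s)) ∂ν' := by
  simp only [measureReal_def]
  rw [integral_toReal (antitone_measure_Iic_sub ν' T).measurable.aemeasurable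
      (ae_of_all _ fun _ => measure_lt_top _ _),
    integral_toReal (antitone_measure_Iic_sub ν T).measurable.aemeasurable
      (ae_of_all _ fun _ => measure_lt_top _ _),
    lintegral_measure_Iic_sub_comm]

lemma integrable_measureReal_Iic_sub (ν ν' : Measure ℝ) [IsFiniteMeasure ν]
    [IsFiniteMeasure ν'] (T : ℝ) : Integrable (fun t => ν'.real (Iic (T - t))) ν :=
  .of_bound (antitone_measure_Iic_sub ν' T).measurable.ennreal_toReal.aestronglyMeasurable
    (ν'.real univ) (ae_of_all _ fun _ => by
      rw [Real.norm_of_nonneg measureReal_nonneg]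
      exact measureReal_mono (subset_univ _))

lemma integrable_of_continuous_of_ae_mem_Icc {ρ : Measure ℝ} [IsFiniteMeasure ρ] {a b : ℝ}
    (hρ : ∀ᵐ s ∂ρ, s ∈ Icc a b) {f : ℝ → ℝ} (hf : Continuous f) : Integrable f ρ := by
  have h : IntegrableOn f (Icc a b) ρ := hf.integrableOn_Icc
  rwa [IntegrableOn, Measure.restrict_eq_self_of_ae_mem hρ] at h

lemma ite_sub_lt_eq_indicator (T l : ℝ) :
    (fun s : ℝ => if T - s < T then 0 else l) = (Iic 0).indicator fun _ => l := by
  funext s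
  by_cases hs : s ≤ 0 <;> simp [indicator, hs, sub_lt_self_iff]

lemma integral_affine_add_ite_sub_sum {ι : Type*} [Fintype ι] {ρ : Measure ℝ}
    [IsFiniteMeasure ρ] {T : ℝ} (hρ : ∀ᵐ s ∂ρ, s ∈ Icc 0 T) (a b l : ℝ) (w : ι → ℝ)
    {f : ι → ℝ → ℝ} (hf : ∀ i, Integrable (f i) ρ) :
    ∫ s, (a + (T - s) * b + (if T - s < T then 0 else l) - ∑ i, w i * f i s) ∂ρ =
      ∫ s, (a + (T - s) * b) ∂ρ + l * ρ.real (Iic 0) - ∑ i, w i * ∫ s, f i s ∂ρ := by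
  have h_affine : Integrable (fun s => a + (T - s) * b) ρ :=
    integrable_of_continuous_of_ae_mem_Icc hρ (by fun_prop)
  have h_ite : Integrable (fun s => if T - s < T then 0 else l) ρ := by
    rw [ite_sub_lt_eq_indicator]
    exact (integrable_const l).indicator measurableSet_Iic
  have h_sum : Integrable (fun s => ∑ i, w i * f i s) ρ :=
    integrable_finsetSum _ fun i _ => (hf i).const_mul (w i)
  have h_first : Integrable (fun s => a + (T - s) * b + (if T - s < T then 0 else l)) ρ :=
    h_affine.add h_ite
  rw [integral_sub h_first h_sum, integral_add h_affine h_ite,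
    integral_finsetSum _ fun i _ => (hf i).const_mul (w i), ite_sub_lt_eq_indicator,
    integral_indicator_const l measurableSet_Iic, smul_eq_mul, mul_comm]
  simp only [integral_const_mul]

lemma nonneg_of_monotoneOn_Icc {f : ℝ → ℝ} {T x : ℝ} (hf : MonotoneOn f (Icc 0 T))
    (h0 : 0 ≤ f 0) (hx : x ∈ Icc 0 T) : 0 ≤ f x :=
  h0.trans (hf ⟨le_rfl, hx.1.trans hx.2⟩ hx hx.1)

lemma sum_setIntegral_comp_sub_nonneg {ι : Type*} [Fintype ι] {T : ℝ} {f : ℝ → ι → ℝ}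
    (hf : ∀ x ∈ Icc 0 T, ∀ i, 0 ≤ f x i) (ν : ι → Measure ℝ) :
    0 ≤ ∑ i, ∫ s in Icc 0 T, f (T - s) i ∂(ν i) :=
  Finset.sum_nonneg fun i _ => setIntegral_nonneg measurableSet_Icc fun _ hs =>
    hf _ (sub_mem_Icc_zero_iff_right.2 hs) i

namespace LSFamily

variable {I I' : Type*} {T : ℝ} {F : ℝ → I → ℝ} {ν : I → Measure ℝ}

lemma isFiniteMeasure_restrict_Icc (h : LSFamily T F ν) (hT : 0 ≤ T) (i : I) :
    IsFiniteMeasure ((ν i).restrict (Icc 0 T)) :=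
  MeasureTheory.isFiniteMeasure_restrict.2 <| by
    rw [(h i).2 T ⟨hT, le_rfl⟩]
    exact ENNReal.ofReal_ne_top

lemma measureReal_restrict_Iic (h : LSFamily T F ν) {i : I} {x : ℝ} (hx : x ∈ Icc 0 T)
    (hFx : 0 ≤ F x i) : ((ν i).restrict (Icc 0 T)).real (Iic x) = F x i := by
  have hIic : Iic x ∩ Icc 0 T = Icc 0 x := by
    ext t
    simp only [mem_inter_iff, mem_Iic, mem_Icc]
    grind [hx.2]
  rw [measureReal_def, Measure.restrict_apply measurableSet_Iic, hIic, (h i).2 x hx,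
    ENNReal.toReal_ofReal hFx]

lemma eqOn_comp_sub (h : LSFamily T F ν) {i : I} (hF : ∀ x ∈ Icc 0 T, 0 ≤ F x i) :
    EqOn (fun t => F (T - t) i) (fun t => ((ν i).restrict (Icc 0 T)).real (Iic (T - t)))
      (Icc 0 T) := fun _ ht =>
  have hTt := sub_mem_Icc_zero_iff_right.2 ht
  (h.measureReal_restrict_Iic hTt (hF _ hTt)).symm

lemma integrableOn_comp_sub (h : LSFamily T F ν) (hT : 0 ≤ T) {i : I}
    (hF : ∀ x ∈ Icc 0 T, 0 ≤ F x i) (ρ : Measure ℝ) [IsFiniteMeasure (ρ.restrict (Icc 0 T))] :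
    IntegrableOn (fun t => F (T - t) i) (Icc 0 T) ρ := by
  have := h.isFiniteMeasure_restrict_Icc hT i
  exact IntegrableOn.congr_fun (integrable_measureReal_Iic_sub _ _ T)
    (h.eqOn_comp_sub hF).symm measurableSet_Icc

lemma setIntegral_comp_sub_comm {G : ℝ → I' → ℝ} {ν' : I' → Measure ℝ}
    (hF : LSFamily T F ν) (hG : LSFamily T G ν') (hT : 0 ≤ T)
    {i : I} {j : I'} (hFi : ∀ x ∈ Icc 0 T, 0 ≤ F x i) (hGj : ∀ x ∈ Icc 0 T, 0 ≤ G x j) :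
    ∫ t in Icc 0 T, F (T - t) i ∂(ν' j) = ∫ s in Icc 0 T, G (T - s) j ∂(ν i) := by
  have := hF.isFiniteMeasure_restrict_Icc hT i
  have := hG.isFiniteMeasure_restrict_Icc hT j
  rw [setIntegral_congr_fun measurableSet_Icc (hF.eqOn_comp_sub hFi),
    setIntegral_congr_fun measurableSet_Icc (hG.eqOn_comp_sub hGj)]
  exact integral_measureReal_Iic_sub_comm _ _ T

end LSFamily

section Duality

variable {K J : ℕ} {A : Matrix (Fin K) (Fin J) ℝ} {b β lam : Fin K → ℝ} {c γ μ : Fin J → ℝ}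
  {T : ℝ} {U : ℝ → Fin J → ℝ} {P : ℝ → Fin K → ℝ}

lemma PrimalFeasible.nonneg (hU : PrimalFeasible A b β lam T U) {t : ℝ} (ht : t ∈ Icc 0 T)
    (j : Fin J) : 0 ≤ U t j :=
  nonneg_of_monotoneOn_Icc (hU.1 j) (hU.2.2.1 j) ht

lemma DualFeasible.nonneg (hP : DualFeasible A c γ μ T P) {s : ℝ} (hs : s ∈ Icc 0 T)
    (k : Fin K) : 0 ≤ P s k :=
  nonneg_of_monotoneOn_Icc (hP.1 k) (hP.2.2.1 k) hs

lemma PrimalFeasible.xSlack_nonneg (hU : PrimalFeasible A b β lam T U) {t : ℝ}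
    (ht : t ∈ Icc 0 T) (k : Fin K) : 0 ≤ xSlack A b β lam T U t k := by
  unfold xSlack
  split_ifs with htT
  · linarith [hU.2.2.2.1 t ⟨ht.1, htT⟩ k]
  · obtain rfl : t = T := le_antisymm ht.2 (not_lt.1 htT)
    linarith [hU.2.2.2.2 k]

lemma DualFeasible.qSlack_nonneg (hP : DualFeasible A c γ μ T P) {s : ℝ}
    (hs : s ∈ Icc 0 T) (j : Fin J) : 0 ≤ qSlack A c γ μ T P s j := by
  unfold qSlack
  split_ifs with hsT
  · linarith [hP.2.2.2.1 s ⟨hs.1, hsT⟩ j]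
  · obtain rfl : s = T := le_antisymm hs.2 (not_lt.1 hsT)
    linarith [hP.2.2.2.2 j]

lemma setIntegral_xSlack_comp_sub (hT : 0 ≤ T) {νU : Fin J → Measure ℝ}
    {νP : Fin K → Measure ℝ} (hU : PrimalFeasible A b β lam T U)
    (hP : DualFeasible A c γ μ T P) (hνU : LSFamily T U νU) (hνP : LSFamily T P νP)
    (k : Fin K) :
    ∫ s in Icc 0 T, xSlack A b β lam T U (T - s) k ∂(νP k) =
      ∫ s in Icc 0 T, (β k + (T - s) * b k) ∂(νP k) + lam k * P 0 k -
        ∑ j, A k j * ∫ s in Icc 0 T, U (T - s) j ∂(νP k) := by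
  have := hνP.isFiniteMeasure_restrict_Icc hT k
  have h0 : (0 : ℝ) ∈ Icc 0 T := ⟨le_rfl, hT⟩
  rw [← hνP.measureReal_restrict_Iic h0 (hP.nonneg h0 k)]
  simp only [xSlack, Matrix.mulVec, dotProduct]
  exact integral_affine_add_ite_sub_sum (ae_restrict_mem measurableSet_Icc) _ _ _ _
    fun j => hνU.integrableOn_comp_sub hT (fun x hx => hU.nonneg hx j) _

lemma setIntegral_qSlack_comp_sub (hT : 0 ≤ T) {νU : Fin J → Measure ℝ}
    {νP : Fin K → Measure ℝ} (hU : PrimalFeasible A b β lam T U)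
    (hP : DualFeasible A c γ μ T P) (hνU : LSFamily T U νU) (hνP : LSFamily T P νP)
    (j : Fin J) :
    ∫ t in Icc 0 T, qSlack A c γ μ T P (T - t) j ∂(νU j) =
      ∑ k, A k j * ∫ t in Icc 0 T, P (T - t) k ∂(νU j) -
        ∫ t in Icc 0 T, (γ j + (T - t) * c j) ∂(νU j) - μ j * U 0 j := by
  have := hνU.isFiniteMeasure_restrict_Icc hT j
  have h0 : (0 : ℝ) ∈ Icc 0 T := ⟨le_rfl, hT⟩
  have hq : (fun t => qSlack A c γ μ T P (T - t) j) = fun t =>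
      -(γ j + (T - t) * c j + (if T - t < T then 0 else μ j) - ∑ k, A k j * P (T - t) k) := by
    funext t
    simp only [qSlack, Matrix.mulVec, dotProduct, Matrix.transpose_apply]
    ring
  rw [hq, integral_neg, ← hνU.measureReal_restrict_Iic h0 (hU.nonneg h0 j),
    integral_affine_add_ite_sub_sum (ae_restrict_mem measurableSet_Icc) _ _ _ _
      fun k => hνP.integrableOn_comp_sub hT (fun x hx => hP.nonneg hx k) _]
  ring

theorem zDual_sub_zPrimal (hT : 0 ≤ T) {νU : Fin J → Measure ℝ} {νP : Fin K → Measure ℝ}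
    (hU : PrimalFeasible A b β lam T U) (hP : DualFeasible A c γ μ T P)
    (hνU : LSFamily T U νU) (hνP : LSFamily T P νP) :
    zDual b β lam T P νP - zPrimal c γ μ T U νU =
      (∑ k, ∫ s in Icc 0 T, xSlack A b β lam T U (T - s) k ∂(νP k)) +
        ∑ j, ∫ t in Icc 0 T, qSlack A c γ μ T P (T - t) j ∂(νU j) := by
  have hcomm : ∀ j k, ∫ t in Icc 0 T, P (T - t) k ∂(νU j) =
      ∫ s in Icc 0 T, U (T - s) j ∂(νP k) := fun j k =>
    hνP.setIntegral_comp_sub_comm hνU hT (fun x hx => hP.nonneg hx k)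
      (fun x hx => hU.nonneg hx j)
  simp only [zDual, zPrimal, setIntegral_xSlack_comp_sub hT hU hP hνU hνP,
    setIntegral_qSlack_comp_sub hT hU hP hνU hνP, hcomm, Finset.sum_add_distrib,
    Finset.sum_sub_distrib]
  rw [Finset.sum_comm (f := fun j k => A k j * _)]
  ring

theorem zPrimal_le_zDual (hT : 0 ≤ T) {νU : Fin J → Measure ℝ} {νP : Fin K → Measure ℝ}
    (hU : PrimalFeasible A b β lam T U) (hP : DualFeasible A c γ μ T P)
    (hνU : LSFamily T U νU) (hνP : LSFamily T P νP) :
    zPrimal c γ μ T U νU ≤ zDual b β lam T P νP := by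
  have hX := sum_setIntegral_comp_sub_nonneg (fun _ hx k => hU.xSlack_nonneg hx k) νP
  have hQ := sum_setIntegral_comp_sub_nonneg (fun _ hx j => hP.qSlack_nonneg hx j) νU
  linarith [zDual_sub_zPrimal hT hU hP hνU hνP]

end Duality

/-- `z(U) = z*(P)` iff the complementary slackness conditions hold; in that case
`U` is an optimal solution of M-CLP and `P` is an optimal solution of M-CLP*. -/
theorem equal_objectives_iff_complementary_slackness {K J : ℕ}
    (A : Matrix (Fin K) (Fin J) ℝ) (b β lam : Fin K → ℝ) (c γ μ : Fin J → ℝ) (T : ℝ)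
    (hT : 0 < T)
    (U : ℝ → Fin J → ℝ) (P : ℝ → Fin K → ℝ)
    (νU : Fin J → Measure ℝ) (νP : Fin K → Measure ℝ)
    (hU : PrimalFeasible A b β lam T U) (hP : DualFeasible A c γ μ T P)
    (hνU : LSFamily T U νU) (hνP : LSFamily T P νP) :
    (zPrimal c γ μ T U νU = zDual b β lam T P νP ↔
      (∑ k, ∫ s in Set.Icc (0:ℝ) T, xSlack A b β lam T U (T - s) k ∂(νP k)) = 0 ∧
      (∑ j, ∫ t in Set.Icc (0:ℝ) T, qSlack A c γ μ T P (T - t) j ∂(νU j)) = 0) ∧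
    (zPrimal c γ μ T U νU = zDual b β lam T P νP →
      (∀ (U' : ℝ → Fin J → ℝ) (νU' : Fin J → Measure ℝ),
        PrimalFeasible A b β lam T U' → LSFamily T U' νU' →
        zPrimal c γ μ T U' νU' ≤ zPrimal c γ μ T U νU) ∧
      (∀ (P' : ℝ → Fin K → ℝ) (νP' : Fin K → Measure ℝ),
        DualFeasible A c γ μ T P' → LSFamily T P' νP' →
        zDual b β lam T P νP ≤ zDual b β lam T P' νP')) := by
  have hX := sum_setIntegral_comp_sub_nonneg (fun _ hx k => hU.xSlack_nonneg hx k) νP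
  have hQ := sum_setIntegral_comp_sub_nonneg (fun _ hx j => hP.qSlack_nonneg hx j) νU
  refine ⟨?_, fun hz => ⟨fun U' νU' hU' hνU' => ?_, fun P' νP' hP' hνP' => ?_⟩⟩
  · rw [eq_comm, ← sub_eq_zero, zDual_sub_zPrimal hT.le hU hP hνU hνP,
      add_eq_zero_iff_of_nonneg hX hQ]
  · exact hz ▸ zPrimal_le_zDual hT.le hU' hP hνU' hνP
  · exact hz ▸ zPrimal_le_zDual hT.le hU hP' hνU hνP'
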